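/- arXiv:2306.10603 — 2 statements merged into one kernel-verified Lean document; each statement's English description precedes it below -/
import Mathlib

section
/- Let H_1, H_2, H_3 be Hermitian operators, H = H_1 + H_2 + H_3, and let S_2(t) = e^{-itH_1/2} e^{-itH_2/2} e^{-itH_3} e^{-itH_2/2} e^{-itH_1/2} be the second-order Suzuki (Strang) formula. Then for all t ≥ 0, ‖S_2(t) − e^{-itH}‖ ≤ t³·( (1/24)‖[H_1,[H_2,H_1]]‖ + (1/8)‖[H_2,[H_2,H_1]]‖ + (1/12)‖[H_3,[H_2,H_1]]‖ + (1/24)‖[H_1,[H_3,H_1]]‖ + (1/12)‖[H_2,[H_3,H_1]]‖ + (1/12)‖[H_3,[H_3,H_1]]‖ + (1/24)‖[H_2,[H_3,H_2]]‖ + (1/12)‖[H_3,[H_3,H_2]]‖ ). -/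
/-!
For skew-adjoint `P`, `Y` in a C⋆-algebra, the Strang product `S t = e^{tP} e^{tY} e^{tP}` solves
`S' = (2P + Y + G) S`, where `G t = (e^{tP} Y e^{-tP} - Y) + e^{tP} (e^{tY} P e^{-tY} - P) e^{-tP}`.
Writing both differences as integrals of conjugated commutators gives
`‖G t‖ ≤ t²/2 (‖[Y,[Y,P]]‖ + ‖[P,[Y,P]]‖)`, and since all propagators are unitary, Duhamel's formula
gives `‖S t - e^{t(2P+Y)}‖ ≤ ∫₀ᵗ ‖G‖ ≤ t³/6 (‖[Y,[Y,P]]‖ + ‖[P,[Y,P]]‖)`.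
The three-term formula is the two-term one with `P = -iH₁/2` and `Y = -i(H₂ + H₃)`, whose middle
factor is replaced by the Strang product for `-iH₂/2` and `-iH₃`; the two errors add because the
replacement happens under conjugation by a unitary.
-/

open NormedSpace

section NormedRing

variable {𝕜 R : Type*} [NormedField 𝕜] [NormedRing R] [NormedAlgebra 𝕜 R]

theorem norm_lie_lie_smul (a b c : 𝕜) (X Y Z : R) :
    ‖⁅a • X, ⁅b • Y, c • Z⁆⁆‖ = ‖a‖ * ‖b‖ * ‖c‖ * ‖⁅X, ⁅Y, Z⁆⁆‖ := by
  have h : ⁅a • X, ⁅b • Y, c • Z⁆⁆ = (a * b * c) • ⁅X, ⁅Y, Z⁆⁆ := by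
    simp only [Ring.lie_def, smul_mul_smul_comm, mul_sub, sub_mul, smul_sub, mul_assoc]
    module
  rw [h, norm_smul, norm_mul, norm_mul]

theorem norm_lie_add_lie_add_le (X Y Z : R) :
    ‖⁅X + Y, ⁅X + Y, Z⁆⁆‖ ≤ ‖⁅X, ⁅X, Z⁆⁆‖ + ‖⁅X, ⁅Y, Z⁆⁆‖ + ‖⁅Y, ⁅X, Z⁆⁆‖ + ‖⁅Y, ⁅Y, Z⁆⁆‖ := by
  rw [show ⁅X + Y, ⁅X + Y, Z⁆⁆ = ⁅X, ⁅X, Z⁆⁆ + ⁅X, ⁅Y, Z⁆⁆ + ⁅Y, ⁅X, Z⁆⁆ + ⁅Y, ⁅Y, Z⁆⁆ by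
    simp only [Ring.lie_def]; noncomm_ring]
  exact norm_add₄_le

theorem norm_lie_lie_add_le (X Y Z : R) :
    ‖⁅Z, ⁅X + Y, Z⁆⁆‖ ≤ ‖⁅Z, ⁅X, Z⁆⁆‖ + ‖⁅Z, ⁅Y, Z⁆⁆‖ := by
  rw [show ⁅Z, ⁅X + Y, Z⁆⁆ = ⁅Z, ⁅X, Z⁆⁆ + ⁅Z, ⁅Y, Z⁆⁆ by simp only [Ring.lie_def]; noncomm_ring]
  exact norm_add_le _ _

end NormedRing

section CStarAlgebra

variable {A : Type*} [CStarAlgebra A]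

-- `exp_add_of_commute`, `exp_continuous` and `exp_mem_unitary_of_mem_skewAdjoint` are stated
-- for normed `ℚ`-algebras.
noncomputable instance CStarAlgebra.toNormedAlgebraRat : NormedAlgebra ℚ A :=
  .restrictScalars ℚ ℂ A

theorem hasDerivAt_exp_neg_smul (X : A) (t : ℝ) :
    HasDerivAt (fun s : ℝ => exp (-s • X)) (-(X * exp (-t • X))) t := by
  simpa [Function.comp_def] using (hasDerivAt_exp_smul_const' X (-t)).scomp t (hasDerivAt_neg t)

theorem exp_smul_mul_exp_neg_smul (X : A) (t : ℝ) : exp (t • X) * exp (-t • X) = 1 := by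
  rw [← exp_add_of_commute ((Commute.refl X).smul_left t |>.smul_right (-t)), ← add_smul,
    add_neg_cancel, zero_smul, exp_zero]

theorem exp_neg_smul_mul_exp_smul (X : A) (t : ℝ) : exp (-t • X) * exp (t • X) = 1 := by
  simpa using exp_smul_mul_exp_neg_smul X (-t)

theorem commute_exp_smul_self (X : A) (t : ℝ) : Commute (exp (t • X)) X :=
  ((Commute.refl X).smul_left t).exp_left

theorem exp_smul_mem_unitary {X : A} (hX : X ∈ skewAdjoint A) (t : ℝ) :
    exp (t • X) ∈ unitary A :=
  exp_mem_unitary_of_mem_skewAdjoint (skewAdjoint.smul_mem t hX)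

theorem norm_mul_mul_sub_le_of_mem_unitary {u v : A} (hu : u ∈ unitary A) (hv : v ∈ unitary A)
    (B C D : A) : ‖u * B * v - D‖ ≤ ‖B - C‖ + ‖u * C * v - D‖ :=
  calc ‖u * B * v - D‖ = ‖u * (B - C) * v + (u * C * v - D)‖ := by congr 1; noncomm_ring
    _ ≤ ‖u * (B - C) * v‖ + ‖u * C * v - D‖ := norm_add_le _ _
    _ = ‖B - C‖ + ‖u * C * v - D‖ := by
        rw [CStarRing.norm_mul_mem_unitary _ hv, CStarRing.norm_mem_unitary_mul _ hu]

theorem norm_sub_exp_smul_le_integral {Z : A} (hZ : Z ∈ skewAdjoint A) {U G : ℝ → A}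
    (hU₀ : U 0 = 1) (hU : ∀ s, HasDerivAt U ((Z + G s) * U s) s) (hUu : ∀ s, U s ∈ unitary A)
    (hG : Continuous G) {t : ℝ} (ht : 0 ≤ t) :
    ‖U t - exp (t • Z)‖ ≤ ∫ s in 0..t, ‖G s‖ := by
  have hderiv : ∀ s, HasDerivAt (fun s => exp (-s • Z) * U s) (exp (-s • Z) * (G s * U s)) s :=
    fun s => ((hasDerivAt_exp_neg_smul Z s).mul (hU s)).congr_deriv (by
      rw [← (commute_exp_smul_self Z (-s)).eq]; noncomm_ring)
  have hUc : Continuous U := continuous_iff_continuousAt.2 fun s => (hU s).continuousAt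
  have hnorm : ∀ s, ‖exp (-s • Z) * (G s * U s)‖ = ‖G s‖ := fun s => by
    rw [CStarRing.norm_mem_unitary_mul _ (exp_smul_mem_unitary hZ _),
      CStarRing.norm_mul_mem_unitary _ (hUu s)]
  calc ‖U t - exp (t • Z)‖ = ‖exp (-t • Z) * U t - 1‖ := by
        rw [← CStarRing.norm_mem_unitary_mul _ (exp_smul_mem_unitary hZ (-t)), mul_sub,
          exp_neg_smul_mul_exp_smul]
    _ = ‖∫ s in 0..t, exp (-s • Z) * (G s * U s)‖ := by
        rw [intervalIntegral.integral_eq_sub_of_hasDerivAt (fun s _ => hderiv s)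
          (Continuous.intervalIntegrable (by fun_prop) 0 t), neg_zero, zero_smul, exp_zero,
          one_mul, hU₀]
    _ ≤ ∫ s in 0..t, ‖G s‖ := intervalIntegral.norm_integral_le_of_norm_le ht
        (.of_forall fun s _ => (hnorm s).le) (hG.norm.intervalIntegrable 0 t)

noncomputable def conjExp (X C : A) (t : ℝ) : A := exp (t • X) * C * exp (-t • X)

theorem conjExp_zero (X C : A) : conjExp X C 0 = C := by
  simp [conjExp]

theorem conjExp_self (X : A) (t : ℝ) : conjExp X X t = X := by
  rw [conjExp, (commute_exp_smul_self X t).eq, mul_assoc, exp_smul_mul_exp_neg_smul, mul_one]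

theorem conjExp_sub (X C D : A) (t : ℝ) :
    conjExp X (C - D) t = conjExp X C t - conjExp X D t := by
  simp only [conjExp, mul_sub, sub_mul]

theorem conjExp_mul_exp_smul_mul (X C B : A) (t : ℝ) :
    conjExp X C t * (exp (t • X) * B) = exp (t • X) * (C * B) := by
  rw [conjExp, mul_assoc, mul_assoc, ← mul_assoc (exp (-t • X)), exp_neg_smul_mul_exp_smul,
    one_mul]

theorem conjExp_intervalIntegral (X : A) (t : ℝ) {f : ℝ → A} {a b : ℝ}
    (hf : IntervalIntegrable f MeasureTheory.volume a b) :
    conjExp X (∫ u in a..b, f u) t = ∫ u in a..b, conjExp X (f u) t :=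
  ((ContinuousLinearMap.mulLeftRight ℂ A (exp (t • X)) (exp (-t • X))).intervalIntegral_comp_comm
    hf).symm

theorem continuous_conjExp (X C : A) : Continuous (conjExp X C) := by
  unfold conjExp
  fun_prop

theorem hasDerivAt_conjExp (X C : A) (t : ℝ) :
    HasDerivAt (conjExp X C) (conjExp X ⁅X, C⁆ t) t := by
  refine (((hasDerivAt_exp_smul_const X t).mul_const C).mul
    (hasDerivAt_exp_neg_smul X t)).congr_deriv ?_
  rw [conjExp, Ring.lie_def]
  noncomm_ring

theorem conjExp_sub_conjExp (X C : A) (s t : ℝ) :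
    conjExp X C t - conjExp X C s = ∫ u in s..t, conjExp X ⁅X, C⁆ u :=
  (intervalIntegral.integral_eq_sub_of_hasDerivAt (fun u _ => hasDerivAt_conjExp X C u)
    ((continuous_conjExp X _).intervalIntegrable s t)).symm

theorem norm_conjExp {X : A} (hX : X ∈ skewAdjoint A) (C : A) (t : ℝ) :
    ‖conjExp X C t‖ = ‖C‖ := by
  rw [conjExp, CStarRing.norm_mul_mem_unitary _ (exp_smul_mem_unitary hX _),
    CStarRing.norm_mem_unitary_mul _ (exp_smul_mem_unitary hX _)]

theorem norm_conjExp_sub_conjExp_le {X : A} (hX : X ∈ skewAdjoint A) (C : A) (s t : ℝ) :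
    ‖conjExp X C t - conjExp X C s‖ ≤ |t - s| * ‖⁅X, C⁆‖ := by
  rw [conjExp_sub_conjExp, mul_comm]
  exact intervalIntegral.norm_integral_le_of_norm_le_const fun u _ => (norm_conjExp hX _ u).le

noncomputable def strang (P Y : A) (t : ℝ) : A := exp (t • P) * exp (t • Y) * exp (t • P)

noncomputable def strangDefect (P Y : A) (t : ℝ) : A :=
  (conjExp P Y t - Y) + (conjExp P (conjExp Y P t) t - P)

theorem strang_zero (P Y : A) : strang P Y 0 = 1 := by
  simp [strang]

theorem strang_mem_unitary {P Y : A} (hP : P ∈ skewAdjoint A) (hY : Y ∈ skewAdjoint A) (t : ℝ) :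
    strang P Y t ∈ unitary A :=
  mul_mem (mul_mem (exp_smul_mem_unitary hP t) (exp_smul_mem_unitary hY t))
    (exp_smul_mem_unitary hP t)

theorem continuous_strangDefect (P Y : A) : Continuous (strangDefect P Y) := by
  unfold strangDefect conjExp
  fun_prop

theorem hasDerivAt_strang (P Y : A) (t : ℝ) :
    HasDerivAt (strang P Y) ((2 • P + Y + strangDefect P Y t) * strang P Y t) t := by
  have hsum : 2 • P + Y + strangDefect P Y t
      = P + conjExp P Y t + conjExp P (conjExp Y P t) t := by
    rw [strangDefect, two_nsmul]; abel
  refine (((hasDerivAt_exp_smul_const' P t).mul (hasDerivAt_exp_smul_const' Y t)).mul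
    (hasDerivAt_exp_smul_const' P t)).congr_deriv ?_
  simp only [Pi.mul_apply]
  rw [hsum, strang, mul_assoc (exp (t • P)) (exp (t • Y)) (exp (t • P))]
  simp only [add_mul, conjExp_mul_exp_smul_mul]
  noncomm_ring

theorem norm_strangDefect_le {P Y : A} (hP : P ∈ skewAdjoint A) (hY : Y ∈ skewAdjoint A) {t : ℝ}
    (ht : 0 ≤ t) : ‖strangDefect P Y t‖ ≤ t ^ 2 / 2 * (‖⁅Y, ⁅Y, P⁆⁆‖ + ‖⁅P, ⁅Y, P⁆⁆‖) := by
  set C := ⁅Y, P⁆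
  have hint : strangDefect P Y t
      = ∫ u in 0..t, (conjExp P ⁅P, Y⁆ u + conjExp P (conjExp Y C u) t) := by
    have hcont : Continuous fun u => conjExp P (conjExp Y C u) t := by
      unfold conjExp; fun_prop
    rw [intervalIntegral.integral_add ((continuous_conjExp P _).intervalIntegrable 0 t)
        (hcont.intervalIntegrable 0 t), ← conjExp_sub_conjExp,
      ← conjExp_intervalIntegral P t ((continuous_conjExp Y C).intervalIntegrable 0 t),
      ← conjExp_sub_conjExp, conjExp_zero, conjExp_zero, conjExp_sub, conjExp_self, strangDefect]
  have hsplit : ∀ u, conjExp P ⁅P, Y⁆ u + conjExp P (conjExp Y C u) t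
      = conjExp P (conjExp Y C u - C) t + (conjExp P C t - conjExp P C u) := fun u => by
    simp only [conjExp, C, Ring.lie_def]
    noncomm_ring
  have hbound : ∀ u ∈ Set.Ioc 0 t,
      ‖conjExp P ⁅P, Y⁆ u + conjExp P (conjExp Y C u) t‖
        ≤ u * ‖⁅Y, C⁆‖ + (t - u) * ‖⁅P, C⁆‖ := by
    intro u hu
    rw [hsplit]
    refine (norm_add_le _ _).trans (add_le_add ?_ ?_)
    · have h := norm_conjExp_sub_conjExp_le hY C 0 u
      rwa [conjExp_zero, sub_zero, abs_of_nonneg hu.1.le, ← norm_conjExp hP _ t] at h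
    · have h := norm_conjExp_sub_conjExp_le hP C u t
      rwa [abs_of_nonneg (sub_nonneg.2 hu.2)] at h
  calc ‖strangDefect P Y t‖ ≤ ∫ u in 0..t, (u * ‖⁅Y, C⁆‖ + (t - u) * ‖⁅P, C⁆‖) := by
        rw [hint]
        exact intervalIntegral.norm_integral_le_of_norm_le ht (.of_forall hbound)
          (Continuous.intervalIntegrable (by fun_prop) 0 t)
    _ = t ^ 2 / 2 * (‖⁅Y, C⁆‖ + ‖⁅P, C⁆‖) := by
        rw [intervalIntegral.integral_add (Continuous.intervalIntegrable (by fun_prop) _ _)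
            (Continuous.intervalIntegrable (by fun_prop) _ _), intervalIntegral.integral_mul_const,
          intervalIntegral.integral_mul_const, intervalIntegral.integral_comp_sub_left (fun u => u)]
        simp only [sub_self, sub_zero, integral_id]
        ring

theorem norm_strang_sub_exp_smul_le {P Y : A} (hP : P ∈ skewAdjoint A) (hY : Y ∈ skewAdjoint A)
    {t : ℝ} (ht : 0 ≤ t) :
    ‖strang P Y t - exp (t • (2 • P + Y))‖ ≤ t ^ 3 / 6 * (‖⁅Y, ⁅Y, P⁆⁆‖ + ‖⁅P, ⁅Y, P⁆⁆‖) :=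
  calc ‖strang P Y t - exp (t • (2 • P + Y))‖ ≤ ∫ s in 0..t, ‖strangDefect P Y s‖ :=
        norm_sub_exp_smul_le_integral (add_mem (nsmul_mem hP 2) hY) (strang_zero P Y)
          (hasDerivAt_strang P Y) (strang_mem_unitary hP hY) (continuous_strangDefect P Y) ht
    _ ≤ ∫ s in 0..t, s ^ 2 / 2 * (‖⁅Y, ⁅Y, P⁆⁆‖ + ‖⁅P, ⁅Y, P⁆⁆‖) :=
        intervalIntegral.integral_mono_on ht
          ((continuous_strangDefect P Y).norm.intervalIntegrable 0 t)
          (Continuous.intervalIntegrable (by fun_prop) _ _)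
          fun s hs => norm_strangDefect_le hP hY hs.1
    _ = t ^ 3 / 6 * (‖⁅Y, ⁅Y, P⁆⁆‖ + ‖⁅P, ⁅Y, P⁆⁆‖) := by
        rw [intervalIntegral.integral_mul_const, intervalIntegral.integral_div, integral_pow]
        ring

theorem norm_strang_strang_sub_exp_smul_le {P₁ P₂ Y : A} (hP₁ : P₁ ∈ skewAdjoint A)
    (hP₂ : P₂ ∈ skewAdjoint A) (hY : Y ∈ skewAdjoint A) {t : ℝ} (ht : 0 ≤ t) :
    ‖exp (t • P₁) * exp (t • P₂) * exp (t • Y) * exp (t • P₂) * exp (t • P₁)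
        - exp (t • (2 • P₁ + (2 • P₂ + Y)))‖
      ≤ t ^ 3 / 6 * (‖⁅Y, ⁅Y, P₂⁆⁆‖ + ‖⁅P₂, ⁅Y, P₂⁆⁆‖
          + ‖⁅2 • P₂ + Y, ⁅2 • P₂ + Y, P₁⁆⁆‖ + ‖⁅P₁, ⁅2 • P₂ + Y, P₁⁆⁆‖) :=
  calc _ = ‖exp (t • P₁) * strang P₂ Y t * exp (t • P₁) - exp (t • (2 • P₁ + (2 • P₂ + Y)))‖ := by
        simp only [strang, mul_assoc]
    _ ≤ ‖strang P₂ Y t - exp (t • (2 • P₂ + Y))‖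
          + ‖strang P₁ (2 • P₂ + Y) t - exp (t • (2 • P₁ + (2 • P₂ + Y)))‖ :=
        norm_mul_mul_sub_le_of_mem_unitary (exp_smul_mem_unitary hP₁ t)
          (exp_smul_mem_unitary hP₁ t) _ _ _
    _ ≤ _ := by
        have := add_le_add (norm_strang_sub_exp_smul_le hP₂ hY ht)
          (norm_strang_sub_exp_smul_le hP₁ (add_mem (nsmul_mem hP₂ 2) hY) ht)
        linarith

end CStarAlgebra

/-- **Trotter error bound (from Theorem 1 with `s = 3`) for the second-order Suzuki formula
with three Hermitian terms.** -/
theorem strang_error_bound_three_terms_general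
    {E : Type*} [NormedAddCommGroup E] [InnerProductSpace ℂ E] [FiniteDimensional ℂ E]
    (H₁ H₂ H₃ : E →L[ℂ] E)
    (hH₁ : IsSelfAdjoint H₁) (hH₂ : IsSelfAdjoint H₂) (hH₃ : IsSelfAdjoint H₃)
    (H : E →L[ℂ] E) (hH : H = H₁ + H₂ + H₃) :
    ∀ t : ℝ, 0 ≤ t →
      ‖exp ((-(Complex.I * t) / 2) • H₁) * exp ((-(Complex.I * t) / 2) • H₂) *
          exp ((-(Complex.I * t)) • H₃) * exp ((-(Complex.I * t) / 2) • H₂) *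
          exp ((-(Complex.I * t) / 2) • H₁) - exp ((-(Complex.I * t)) • H)‖
        ≤ t ^ 3 * (1 / 24 * ‖⁅H₁, ⁅H₂, H₁⁆⁆‖ + 1 / 8 * ‖⁅H₂, ⁅H₂, H₁⁆⁆‖
            + 1 / 12 * ‖⁅H₃, ⁅H₂, H₁⁆⁆‖ + 1 / 24 * ‖⁅H₁, ⁅H₃, H₁⁆⁆‖
            + 1 / 12 * ‖⁅H₂, ⁅H₃, H₁⁆⁆‖ + 1 / 12 * ‖⁅H₃, ⁅H₃, H₁⁆⁆‖
            + 1 / 24 * ‖⁅H₂, ⁅H₃, H₂⁆⁆‖ + 1 / 12 * ‖⁅H₃, ⁅H₃, H₂⁆⁆‖) := by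
  intro t ht
  subst hH
  have hI : -Complex.I ∈ skewAdjoint ℂ := by simp [skewAdjoint.mem_iff]
  have hI2 : -Complex.I / 2 ∈ skewAdjoint ℂ := by simp [skewAdjoint.mem_iff, neg_div]
  have hexp (c : ℂ) (X : E →L[ℂ] E) : exp ((c * t) • X) = exp (t • c • X) := by
    rw [← Complex.coe_smul, smul_smul, mul_comm]
  have hW : 2 • (-Complex.I / 2) • H₂ + (-Complex.I) • H₃ = (-Complex.I) • (H₂ + H₃) := by module
  have hZ : 2 • (-Complex.I / 2) • H₁ + (-Complex.I) • (H₂ + H₃)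
      = (-Complex.I) • (H₁ + H₂ + H₃) := by module
  rw [show -(Complex.I * t) / 2 = -Complex.I / 2 * t by ring,
    show -(Complex.I * t) = -Complex.I * t by ring, hexp, hexp, hexp, hexp, ← hZ, ← hW]
  refine (norm_strang_strang_sub_exp_smul_le (hH₁.smul_mem_skewAdjoint hI2)
    (hH₂.smul_mem_skewAdjoint hI2) (hH₃.smul_mem_skewAdjoint hI) ht).trans ?_
  rw [hW]
  simp only [norm_lie_lie_smul (𝕜 := ℂ) (R := E →L[ℂ] E), norm_neg, norm_div, Complex.norm_I,
    Complex.norm_ofNat]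
  rw [div_mul_eq_mul_div, mul_div_assoc]
  gcongr t ^ 3 * ?_
  linarith [norm_lie_add_lie_add_le H₂ H₃ H₁, norm_lie_lie_add_le H₂ H₃ H₁,
    norm_nonneg ⁅H₂, ⁅H₂, H₁⁆⁆]
end

section
/- For the decomposition of the one-dimensional Fermi-Hubbard Hamiltonian, [H_1, [H_2, H_1]] = 2v³ Σ_{i∈Λ'} Σ_{σ∈{↑,↓}} ( h_{i−2,i+1,σ} − h_{i−1,i,σ} ), and [H_2, [H_2, H_1]] = 2v³ Σ_{i∈Λ'} Σ_{σ∈{↑,↓}} ( h_{i,i+1,σ} − h_{i−1,i+2,σ} ). -/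
/-- The hopping term `h_{ijσ} = a_{iσ}† a_{jσ} + a_{jσ}† a_{iσ}`. -/
noncomputable def hop {E : Type*} [NormedAddCommGroup E] [InnerProductSpace ℂ E]
    [CompleteSpace E] {Λ : Type*} (a : Λ → Bool → E →L[ℂ] E) (i j : Λ) (σ : Bool) :
    E →L[ℂ] E :=
  star (a i σ) * a j σ + star (a j σ) * a i σ

/-- The signed hopping term `h̃_{ijσ} = a_{iσ}† a_{jσ} − a_{jσ}† a_{iσ}`. -/
noncomputable def shop {E : Type*} [NormedAddCommGroup E] [InnerProductSpace ℂ E]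
    [CompleteSpace E] {Λ : Type*} (a : Λ → Bool → E →L[ℂ] E) (i j : Λ) (σ : Bool) :
    E →L[ℂ] E :=
  star (a i σ) * a j σ - star (a j σ) * a i σ

/-- The number operator `n_{iσ} = a_{iσ}† a_{iσ}`. -/
noncomputable def num {E : Type*} [NormedAddCommGroup E] [InnerProductSpace ℂ E]
    [CompleteSpace E] {Λ : Type*} (a : Λ → Bool → E →L[ℂ] E) (i : Λ) (σ : Bool) :
    E →L[ℂ] E :=
  star (a i σ) * a i σ

/-- The "even-odd" kinetic term `H₁ = v Σ_{i∈Λ'} Σ_σ h_{i,i+1,σ}` of the one-dimensional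
Fermi-Hubbard Hamiltonian, with `Λ' = {0, 2, …, L−2} ⊂ ℤ/Lℤ` and spin `↑ = true`, `↓ = false`. -/
noncomputable def FH1 {E : Type*} [NormedAddCommGroup E] [InnerProductSpace ℂ E]
    [CompleteSpace E] {L : ℕ} (a : ZMod L → Bool → E →L[ℂ] E) (v : ℝ) : E →L[ℂ] E :=
  (v : ℂ) • ∑ i ∈ Finset.range (L / 2), ∑ σ : Bool,
    hop a ((2 * i : ℕ) : ZMod L) (((2 * i : ℕ) : ZMod L) + 1) σ

/-- The "odd-even" kinetic term `H₂ = v Σ_{i∈Λ'} Σ_σ h_{i−1,i,σ}`. -/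
noncomputable def FH2 {E : Type*} [NormedAddCommGroup E] [InnerProductSpace ℂ E]
    [CompleteSpace E] {L : ℕ} (a : ZMod L → Bool → E →L[ℂ] E) (v : ℝ) : E →L[ℂ] E :=
  (v : ℂ) • ∑ i ∈ Finset.range (L / 2), ∑ σ : Bool,
    hop a (((2 * i : ℕ) : ZMod L) - 1) ((2 * i : ℕ) : ZMod L) σ

/-- The interaction term `H₃ = u Σ_{i∈Λ'} (n_{i↑}n_{i↓} + n_{i+1,↑}n_{i+1,↓})`. -/
noncomputable def FH3 {E : Type*} [NormedAddCommGroup E] [InnerProductSpace ℂ E]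
    [CompleteSpace E] {L : ℕ} (a : ZMod L → Bool → E →L[ℂ] E) (u : ℝ) : E →L[ℂ] E :=
  (u : ℂ) • ∑ i ∈ Finset.range (L / 2),
    (num a ((2 * i : ℕ) : ZMod L) true * num a ((2 * i : ℕ) : ZMod L) false +
      num a (((2 * i : ℕ) : ZMod L) + 1) true * num a (((2 * i : ℕ) : ZMod L) + 1) false)

/-!
The canonical anticommutation relations turn commutators of the one-body operators
`T f = ∑ₓ c†ₓ c_{f x}` into differences of compositions, `⁅T f, T g⁆ = T (g ∘ f) - T (f ∘ g)`.
The two kinetic terms are `H₁ = v T P` and `H₂ = v T Q`, where the involutions `P` and `Q` of the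
sites pair every even site with its right, resp. left, neighbour. Since `P ∘ P = Q ∘ Q = id`,
this gives `⁅H₁, ⁅H₂, H₁⁆⁆ = 2v³ (T (P ∘ Q ∘ P) - T Q)` and
`⁅H₂, ⁅H₂, H₁⁆⁆ = 2v³ (T P - T (Q ∘ P ∘ Q))`, and `P ∘ Q ∘ P`, `Q ∘ P ∘ Q` pair every even site
with the site three steps to its right, resp. left.
-/

structure IsCAR {R ι : Type*} [Ring R] [StarRing R] [DecidableEq ι] (c : ι → R) : Prop where
  anticomm : ∀ x y, c x * c y + c y * c x = 0
  anticomm_star : ∀ x y, c x * star (c y) + star (c y) * c x = if x = y then 1 else 0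

/-- For an involution `f` this is the sum of the hopping terms `c†ₓ c_{f x} + c†_{f x} cₓ` over
the pairs `{x, f x}`. -/
def hoppingOp {R ι : Type*} [Ring R] [Star R] [Fintype ι] (c : ι → R) (f : ι → ι) : R :=
  ∑ x, star (c x) * c (f x)

namespace IsCAR

variable {R ι : Type*} [Ring R] [StarRing R] [DecidableEq ι] {c : ι → R}

theorem star_anticomm (hc : IsCAR c) (x y : ι) :
    star (c x) * star (c y) + star (c y) * star (c x) = 0 := by
  simpa only [star_add, star_mul, star_zero] using congrArg star (hc.anticomm y x)

theorem lie_star_mul_star_mul (hc : IsCAR c) (i j k l : ι) :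
    ⁅star (c i) * c j, star (c k) * c l⁆ =
      (if j = k then star (c i) * c l else 0) - (if l = i then star (c k) * c j else 0) := by
  have hjk := eq_sub_of_add_eq (hc.anticomm_star j k)
  have hli := eq_sub_of_add_eq (hc.anticomm_star l i)
  have hik := eq_neg_of_add_eq_zero_left (hc.star_anticomm i k)
  have hjl := eq_neg_of_add_eq_zero_left (hc.anticomm j l)
  calc ⁅star (c i) * c j, star (c k) * c l⁆
      = star (c i) * (c j * star (c k)) * c l - star (c k) * (c l * star (c i)) * c j := by
        rw [Ring.lie_def]; noncomm_ring
    _ = (if j = k then star (c i) * c l else 0) - (if l = i then star (c k) * c j else 0)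
        - (star (c i) * star (c k)) * (c j * c l) + star (c k) * star (c i) * (c l * c j) := by
        rw [hjk, hli]
        split_ifs <;> noncomm_ring
    _ = _ := by rw [hik, hjl]; noncomm_ring

variable [Fintype ι]

theorem lie_hoppingOp (hc : IsCAR c) (f g : ι → ι) :
    ⁅hoppingOp c f, hoppingOp c g⁆ = hoppingOp c (g ∘ f) - hoppingOp c (f ∘ g) := by
  -- Mathlib's Lie ring structure on `R` (bracket `x * y - y * x`) is not a global instance.
  let := LieRing.ofAssociativeRing (A := R)
  simp only [hoppingOp, sum_lie_sum, hc.lie_star_mul_star_mul, Finset.sum_sub_distrib]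
  rw [Finset.sum_comm (s := Finset.univ) (t := Finset.univ)
    (f := fun x y => if g y = x then _ else _)]
  simp only [Finset.sum_ite_eq, Finset.mem_univ, if_true, Function.comp_apply]

theorem lie_hoppingOp_lie_hoppingOp_of_involutive (hc : IsCAR c) {f : ι → ι}
    (hf : Function.Involutive f) (g : ι → ι) :
    ⁅hoppingOp c f, ⁅hoppingOp c g, hoppingOp c f⁆⁆ =
      2 • (hoppingOp c (f ∘ g ∘ f) - hoppingOp c g) := by
  have hff : ∀ h : ι → ι, f ∘ (f ∘ h) = h := fun h => by
    rw [← Function.comp_assoc, hf.comp_self, Function.id_comp]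
  let := LieRing.ofAssociativeRing (A := R)
  rw [hc.lie_hoppingOp, lie_sub, hc.lie_hoppingOp, hc.lie_hoppingOp]
  simp only [Function.comp_assoc, hff, hf.comp_self, Function.comp_id]
  abel

end IsCAR

def parity (n : ℕ) : ZMod (2 * n) →+* ZMod 2 := ZMod.castHom (dvd_mul_right 2 n) (ZMod 2)

section Chain

variable {n : ℕ}

def bondPartner (d x : ZMod (2 * n)) : ZMod (2 * n) := if parity n x = 0 then x + d else x - d

theorem parity_eq_zero_or_eq_one (x : ZMod (2 * n)) : parity n x = 0 ∨ parity n x = 1 := by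
  generalize parity n x = p
  decide +revert

theorem parity_natCast_two_mul (i : ℕ) : parity n ((2 * i : ℕ) : ZMod (2 * n)) = 0 := by
  rw [map_natCast, ZMod.natCast_eq_zero_iff_even]
  exact even_two_mul i

theorem bondPartner_of_parity_eq_zero {d x : ZMod (2 * n)} (hx : parity n x = 0) :
    bondPartner d x = x + d := if_pos hx

theorem bondPartner_of_parity_eq_one {d x : ZMod (2 * n)} (hx : parity n x = 1) :
    bondPartner d x = x - d := if_neg (by simp [hx])

theorem bondPartner_involutive {d : ZMod (2 * n)} (hd : parity n d = 1) :
    Function.Involutive (bondPartner d) := by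
  intro x
  rcases parity_eq_zero_or_eq_one x with hx | hx
  · rw [bondPartner_of_parity_eq_zero hx, bondPartner_of_parity_eq_one (by simp [hx, hd]),
      add_sub_cancel_right]
  · rw [bondPartner_of_parity_eq_one hx, bondPartner_of_parity_eq_zero (by simp [hx, hd]),
      sub_add_cancel]

theorem bondPartner_comp_bondPartner_comp_bondPartner {d d' : ZMod (2 * n)}
    (hd : parity n d = 1) (hd' : parity n d' = 1) :
    bondPartner d ∘ bondPartner d' ∘ bondPartner d = bondPartner (2 * d - d') := by
  funext x
  simp only [Function.comp_apply]
  rcases parity_eq_zero_or_eq_one x with hx | hx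
  · have h₁ : parity n (x + d) = 1 := by simp [hx, hd]
    have h₂ : parity n (x + d - d') = 0 := by simp [hx, hd, hd']
    rw [bondPartner_of_parity_eq_zero (d := d) hx, bondPartner_of_parity_eq_one h₁,
      bondPartner_of_parity_eq_zero h₂, bondPartner_of_parity_eq_zero hx]
    ring
  · have h₁ : parity n (x - d) = 0 := by simp [hx, hd]
    have h₂ : parity n (x - d + d') = 1 := by simp [hx, hd, hd']
    rw [bondPartner_of_parity_eq_one (d := d) hx, bondPartner_of_parity_eq_zero h₁,
      bondPartner_of_parity_eq_one h₂, bondPartner_of_parity_eq_one hx]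
    ring

variable [NeZero n]

section Sums

variable {M : Type*} [AddCommMonoid M]

theorem sum_range_eq_sum_parity_eq_zero (G : ZMod (2 * n) → M) :
    ∑ i ∈ Finset.range n, G ((2 * i : ℕ) : ZMod (2 * n)) = ∑ x with parity n x = 0, G x := by
  refine Finset.sum_nbij' (fun i => ((2 * i : ℕ) : ZMod (2 * n))) (fun x => x.val / 2)
    (fun i _ => Finset.mem_filter.mpr ⟨Finset.mem_univ _, parity_natCast_two_mul i⟩)
    (fun x _ => Finset.mem_range.mpr (by have := x.val_lt; omega)) ?_ ?_ (fun _ _ => rfl)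
  · intro i hi
    rw [Finset.mem_range] at hi
    rw [ZMod.val_cast_of_lt (by omega)]
    omega
  · intro x hx
    have heven : Even x.val := by
      have hx₀ := (Finset.mem_filter.mp hx).2
      rwa [parity, ZMod.castHom_apply, ZMod.cast_eq_val, ZMod.natCast_eq_zero_iff_even] at hx₀
    rw [Nat.two_mul_div_two_of_even heven, ZMod.natCast_zmod_val]

theorem sum_parity_eq_add (G : ZMod (2 * n) → M) (e : ZMod (2 * n)) (p : ZMod 2) :
    ∑ x with parity n x = p, G (x + e) = ∑ x with parity n x = p + parity n e, G x :=
  Finset.sum_equiv (Equiv.addRight e) (by simp) (fun _ _ => rfl)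

theorem sum_parity_eq_zero_add_sum_parity_eq_one (G : ZMod (2 * n) → M) :
    ∑ x with parity n x = 0, G x + ∑ x with parity n x = 1, G x = ∑ x, G x := by
  rw [← Finset.sum_filter_add_sum_filter_not Finset.univ (fun x => parity n x = 0)]
  congr 2
  ext x
  rcases parity_eq_zero_or_eq_one x with hx | hx <;> simp [hx]

end Sums

def bondHop {R : Type*} [Ring R] [Star R] (a : ZMod (2 * n) → Bool → R) (d : ZMod (2 * n)) : R :=
  hoppingOp (fun p : ZMod (2 * n) × Bool => a p.1 p.2) (Prod.map (bondPartner d) id)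

theorem IsCAR.lie_bondHop_lie_bondHop {R : Type*} [Ring R] [StarRing R]
    {a : ZMod (2 * n) → Bool → R} (hc : IsCAR fun p : ZMod (2 * n) × Bool => a p.1 p.2)
    {d d' : ZMod (2 * n)} (hd : parity n d = 1) (hd' : parity n d' = 1) :
    ⁅bondHop a d, ⁅bondHop a d', bondHop a d⁆⁆ = 2 • (bondHop a (2 * d - d') - bondHop a d') := by
  rw [bondHop, bondHop, hc.lie_hoppingOp_lie_hoppingOp_of_involutive
    ((bondPartner_involutive hd).prodMap fun _ => rfl), Prod.map_comp_map,
    Prod.map_comp_map, bondPartner_comp_bondPartner_comp_bondPartner hd hd']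
  rfl

variable {E : Type*} [NormedAddCommGroup E] [InnerProductSpace ℂ E] [CompleteSpace E]

theorem hop_comm {Λ : Type*} (a : Λ → Bool → E →L[ℂ] E) (i j : Λ) (σ : Bool) :
    hop a i j σ = hop a j i σ :=
  add_comm _ _

theorem sum_range_hop (a : ZMod (2 * n) → Bool → E →L[ℂ] E) {e e' : ZMod (2 * n)}
    (he : parity n e = 0) (he' : parity n e' = 1) :
    ∑ i ∈ Finset.range n, ∑ σ, hop a ((2 * i : ℕ) + e) ((2 * i : ℕ) + e') σ =
      bondHop a (e' - e) := by
  set d := e' - e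
  have hd : parity n d = 1 := by simp [d, he, he']
  set G : ZMod (2 * n) → E →L[ℂ] E := fun y => ∑ σ, star (a y σ) * a (bondPartner d y) σ
  have hpair : ∀ x, parity n x = 0 → ∑ σ, hop a x (x + d) σ = G x + G (x + d) := by
    intro x hx
    have hxd : parity n (x + d) = 1 := by simp [hx, hd]
    simp only [G, hop, bondPartner_of_parity_eq_zero hx, bondPartner_of_parity_eq_one hxd,
      add_sub_cancel_right, Finset.sum_add_distrib]
  calc ∑ i ∈ Finset.range n, ∑ σ, hop a ((2 * i : ℕ) + e) ((2 * i : ℕ) + e') σ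
      = ∑ x with parity n x = 0, ∑ σ, hop a (x + e) (x + e + d) σ := by
        rw [← sum_range_eq_sum_parity_eq_zero]
        simp only [d, add_add_sub_cancel]
    _ = ∑ x with parity n x = 0, ∑ σ, hop a x (x + d) σ := by
        rw [sum_parity_eq_add (fun x => ∑ σ, hop a x (x + d) σ), he, add_zero]
    _ = ∑ x with parity n x = 0, G x + ∑ x with parity n x = 1, G x := by
        rw [Finset.sum_congr rfl fun x hx => hpair x (Finset.mem_filter.mp hx).2,
          Finset.sum_add_distrib, sum_parity_eq_add G, hd, zero_add]
    _ = bondHop a d := by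
        rw [sum_parity_eq_zero_add_sum_parity_eq_one, bondHop, hoppingOp, Fintype.sum_prod_type]
        rfl

variable (a : ZMod (2 * n) → Bool → E →L[ℂ] E)

theorem sum_range_hop_add_one :
    ∑ i ∈ Finset.range n, ∑ σ, hop a ((2 * i : ℕ) : ZMod (2 * n)) ((2 * i : ℕ) + 1) σ =
      bondHop a 1 := by
  simpa only [add_zero, sub_zero] using sum_range_hop a (e := 0) (e' := 1) (map_zero _) (map_one _)

theorem sum_range_hop_sub_one :
    ∑ i ∈ Finset.range n, ∑ σ, hop a ((2 * i : ℕ) - 1) ((2 * i : ℕ) : ZMod (2 * n)) σ =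
      bondHop a (-1) := by
  simpa only [add_zero, sub_zero, ← sub_eq_add_neg, hop_comm]
    using sum_range_hop a (e := 0) (e' := -1) (map_zero _) (by simp)

theorem sum_range_hop_sub_two_add_one :
    ∑ i ∈ Finset.range n, ∑ σ, hop a ((2 * i : ℕ) - 2) ((2 * i : ℕ) + 1 : ZMod (2 * n)) σ =
      bondHop a 3 := by
  have h := sum_range_hop a (e := -2) (e' := 1) (by simp only [map_neg, map_ofNat]; decide)
    (map_one _)
  rw [show (1 - -2 : ZMod (2 * n)) = 3 by norm_num] at h
  simpa only [← sub_eq_add_neg] using h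

theorem sum_range_hop_sub_one_add_two :
    ∑ i ∈ Finset.range n, ∑ σ, hop a ((2 * i : ℕ) - 1) ((2 * i : ℕ) + 2 : ZMod (2 * n)) σ =
      bondHop a (-3) := by
  have h := sum_range_hop a (e := 2) (e' := -1) (by simp only [map_ofNat]; decide) (by simp)
  rw [show (-1 - 2 : ZMod (2 * n)) = -3 by norm_num] at h
  simpa only [← sub_eq_add_neg, hop_comm] using h

end Chain

theorem nested_comm_kinetic_1d_general
    {E : Type*} [NormedAddCommGroup E] [InnerProductSpace ℂ E] [CompleteSpace E]
    {L : ℕ} (hL : Even L)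
    (a : ZMod L → Bool → E →L[ℂ] E)
    (car1 : ∀ (i j : ZMod L) (σ τ : Bool), a i σ * a j τ + a j τ * a i σ = 0)
    (car2 : ∀ (i j : ZMod L) (σ τ : Bool),
      a i σ * star (a j τ) + star (a j τ) * a i σ = if i = j ∧ σ = τ then 1 else 0)
    (v : ℝ) :
    ⁅FH1 a v, ⁅FH2 a v, FH1 a v⁆⁆
      = (2 * (v : ℂ) ^ 3) • ∑ i ∈ Finset.range (L / 2), ∑ σ : Bool,
          (hop a (((2 * i : ℕ) : ZMod L) - 2) (((2 * i : ℕ) : ZMod L) + 1) σ -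
            hop a (((2 * i : ℕ) : ZMod L) - 1) ((2 * i : ℕ) : ZMod L) σ) ∧
    ⁅FH2 a v, ⁅FH2 a v, FH1 a v⁆⁆
      = (2 * (v : ℂ) ^ 3) • ∑ i ∈ Finset.range (L / 2), ∑ σ : Bool,
          (hop a ((2 * i : ℕ) : ZMod L) (((2 * i : ℕ) : ZMod L) + 1) σ -
            hop a (((2 * i : ℕ) : ZMod L) - 1) (((2 * i : ℕ) : ZMod L) + 2) σ) := by
  obtain ⟨n, rfl⟩ := hL.two_dvd
  rcases Nat.eq_zero_or_pos n with rfl | hn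
  · simp [FH1, FH2, Ring.lie_def]
  have : NeZero n := ⟨hn.ne'⟩
  have hc : IsCAR fun p : ZMod (2 * n) × Bool => a p.1 p.2 :=
    ⟨fun _ _ => car1 _ _ _ _, fun _ _ => by simpa only [Prod.ext_iff] using car2 _ _ _ _⟩
  have hP : parity n 1 = 1 := map_one _
  have hQ : parity n (-1) = 1 := by simp
  have hPQP := hc.lie_bondHop_lie_bondHop hP hQ
  have hQPQ := hc.lie_bondHop_lie_bondHop hQ hP
  norm_num only at hPQP hQPQ
  let := LieRing.ofAssociativeRing (A := E →L[ℂ] E)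
  simp only [FH1, FH2, Nat.mul_div_cancel_left n two_pos, Finset.sum_sub_distrib,
    sum_range_hop_add_one, sum_range_hop_sub_one, sum_range_hop_sub_two_add_one,
    sum_range_hop_sub_one_add_two, smul_lie, lie_smul]
  constructor
  · rw [hPQP]
    module
  · rw [← lie_skew (bondHop a (-1)) (bondHop a 1), lie_neg, hQPQ]
    module

/-- **Nested commutators of the kinetic terms of the 1D Fermi-Hubbard Hamiltonian:**
`[H₁,[H₂,H₁]] = 2v³ Σ_{i∈Λ'} Σ_σ (h_{i−2,i+1,σ} − h_{i−1,i,σ})` and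
`[H₂,[H₂,H₁]] = 2v³ Σ_{i∈Λ'} Σ_σ (h_{i,i+1,σ} − h_{i−1,i+2,σ})`. -/
theorem nested_comm_kinetic_1d
    {E : Type*} [NormedAddCommGroup E] [InnerProductSpace ℂ E] [CompleteSpace E]
    {L : ℕ} (hL : Even L) (hL6 : 6 ≤ L)
    (a : ZMod L → Bool → E →L[ℂ] E)
    (car1 : ∀ (i j : ZMod L) (σ τ : Bool), a i σ * a j τ + a j τ * a i σ = 0)
    (car2 : ∀ (i j : ZMod L) (σ τ : Bool),
      a i σ * star (a j τ) + star (a j τ) * a i σ = if i = j ∧ σ = τ then 1 else 0)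
    (v u : ℝ) :
    ⁅FH1 a v, ⁅FH2 a v, FH1 a v⁆⁆
      = (2 * (v : ℂ) ^ 3) • ∑ i ∈ Finset.range (L / 2), ∑ σ : Bool,
          (hop a (((2 * i : ℕ) : ZMod L) - 2) (((2 * i : ℕ) : ZMod L) + 1) σ -
            hop a (((2 * i : ℕ) : ZMod L) - 1) ((2 * i : ℕ) : ZMod L) σ) ∧
    ⁅FH2 a v, ⁅FH2 a v, FH1 a v⁆⁆
      = (2 * (v : ℂ) ^ 3) • ∑ i ∈ Finset.range (L / 2), ∑ σ : Bool,
          (hop a ((2 * i : ℕ) : ZMod L) (((2 * i : ℕ) : ZMod L) + 1) σ -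
            hop a (((2 * i : ℕ) : ZMod L) - 1) (((2 * i : ℕ) : ZMod L) + 2) σ) :=
  nested_comm_kinetic_1d_general hL a car1 car2 v
end
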